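/- Let Θ ∈ H^∞(B(E, E*)) be contractive, and let H(Θ) = (H²(E*) ⊕ closure(Δ L²(E))) ⊖ M(Θ) be the Sz.-Nagy–Foias model space, with model operator S(Θ) = P_{H(Θ)} (S ⊕ U)|H(Θ). Then the range of S(Θ) equals {f₁ ⊕ f₂ ∈ H(Θ) : f₁(0) ∈ Θ(0)E}, i.e. those elements whose first component vanishes at 0 modulo the range of Θ(0). -/

import Mathlib

/-!
With `V u = Θu ⊕ Δu`, the identity `‖Θu‖² + ‖Δu‖² = ‖u‖²` makes `V` an isometry, so `M(Θ)` is
closed and `H(Θ) ⊥ M(Θ)`.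

If `p ∈ H(Θ)` then `(S ⊕ U)p − S(Θ)p = Vm` for some `m`; since `Sp₁` vanishes at `0`, the zeroth
coefficient of `S(Θ)p` is `−Θ(0)m(0)`.

Conversely, let `q ∈ H(Θ)` with `q₁(0) = Θ(0)x` and put `u = (−x, 0, 0, …)`. The first component
of `q + Vu` vanishes at `0`, so `q + Vu = (S ⊕ U)p`. This `p` lies in `H(Θ)`: `S ⊕ U` preserves
inner products and intertwines `V` with the shift `σ` of `H²(E)`, so
`⟪p, Vv⟫ = ⟪q + Vu, Vσv⟫ = ⟪u, σv⟫ = 0`; and `U⁻¹` preserves `closure (Δ L²(E))` because `U`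
commutes with `Δ`. Finally `q − S(Θ)p ∈ M(Θ)` and both lie in `H(Θ) ⊥ M(Θ)`, so `S(Θ)p = q`.
-/

noncomputable section

/-- The vector-valued Hardy space `H²(E)`, realized via Taylor coefficients. -/
abbrev HardyS (E : Type*) [NormedAddCommGroup E] [InnerProductSpace ℂ E] :=
  lp (fun _ : ℕ => E) 2

/-- The vector-valued Lebesgue space `L²(E)` on the circle, realized via Fourier
coefficients. -/
abbrev LebS (E : Type*) [NormedAddCommGroup E] [InnerProductSpace ℂ E] :=
  lp (fun _ : ℤ => E) 2

variable {E Estar : Type*}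
  [NormedAddCommGroup E] [InnerProductSpace ℂ E] [CompleteSpace E]
  [NormedAddCommGroup Estar] [InnerProductSpace ℂ Estar] [CompleteSpace Estar]

/-- The subspace `M(Θ) = {Θu ⊕ Δu : u ∈ H²(E)}`. -/
def Mset (MΘ : HardyS E →L[ℂ] HardyS Estar) (MΔ : LebS E →L[ℂ] LebS E)
    (ι : HardyS E →L[ℂ] LebS E) : Set (HardyS Estar × LebS E) :=
  Set.range fun u : HardyS E => (MΘ u, MΔ (ι u))

/-- The Sz.-Nagy--Foias model space
`H(Θ) = (H²(E*) ⊕ closure(Δ L²(E))) ⊖ M(Θ)`. -/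
def HTheta (MΘ : HardyS E →L[ℂ] HardyS Estar) (MΔ : LebS E →L[ℂ] LebS E)
    (ι : HardyS E →L[ℂ] LebS E) : Set (HardyS Estar × LebS E) :=
  {p | p.2 ∈ closure (Set.range MΔ) ∧
    ∀ u : HardyS E, (inner ℂ p.1 (MΘ u) : ℂ) + (inner ℂ p.2 (MΔ (ι u)) : ℂ) = 0}


open Function Set
open scoped ENNReal InnerProductSpace

namespace lp

section Shifts

variable {X : Type*} [NormedAddCommGroup X]

theorem memℓp_comp_injective {α β : Type*} {p : ℝ≥0∞} (f : lp (fun _ : α => X) p)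
    {σ : β → α} (hσ : Injective σ) : Memℓp (fun b => f (σ b)) p := by
  rcases p.trichotomy with rfl | rfl | hp
  · exact memℓp_zero ((memℓp_zero_iff.1 f.2).preimage hσ.injOn)
  · exact memℓp_infty ((memℓp_infty_iff.1 f.2).mono (range_comp_subset_range σ fun a => ‖f a‖))
  · exact (memℓp_gen_iff hp).2 (((memℓp_gen_iff hp).1 f.2).comp_injective hσ)

theorem memℓp_shiftRight (f : lp (fun _ : ℕ => X) 2) :
    Memℓp (fun n => if n = 0 then 0 else f (n - 1)) 2 := by
  refine (memℓp_gen_iff (by norm_num)).2 ((summable_nat_add_iff 1).1 ?_)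
  simpa using (memℓp_gen_iff (by norm_num)).1 f.2

def shiftRight (f : lp (fun _ : ℕ => X) 2) : lp (fun _ : ℕ => X) 2 :=
  ⟨fun n => if n = 0 then 0 else f (n - 1), memℓp_shiftRight f⟩

def IsForwardShift (S : lp (fun _ : ℕ => X) 2 → lp (fun _ : ℕ => X) 2) : Prop :=
  ∀ f n, S f n = if n = 0 then 0 else f (n - 1)

def IsBilateralShift (U : lp (fun _ : ℤ => X) 2 → lp (fun _ : ℤ => X) 2) : Prop :=
  ∀ f n, U f n = f (n - 1)

theorem IsForwardShift.exists_eq_of_apply_zero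
    {S : lp (fun _ : ℕ => X) 2 → lp (fun _ : ℕ => X) 2} (hS : IsForwardShift S)
    {g : lp (fun _ : ℕ => X) 2} (hg : g 0 = 0) : ∃ f, S f = g := by
  refine ⟨⟨fun n => g (n + 1), memℓp_comp_injective g (add_left_injective 1)⟩, ?_⟩
  ext (_ | n)
  · rw [hS, if_pos rfl, hg]
  · rw [hS, if_neg n.succ_ne_zero, Nat.add_sub_cancel]

theorem IsBilateralShift.surjective {U : lp (fun _ : ℤ => X) 2 → lp (fun _ : ℤ => X) 2}
    (hU : IsBilateralShift U) : Surjective U := fun g =>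
  ⟨⟨fun n => g (n + 1), memℓp_comp_injective g (add_left_injective 1)⟩,
    by ext n; rw [hU]; exact congrArg g (sub_add_cancel n 1)⟩

theorem semiconj_shiftRight_of_apply_eq_sum {Y F : Type*} [NormedAddCommGroup Y] [FunLike F X Y]
    [ZeroHomClass F X Y] {θ : ℕ → F} {T : lp (fun _ : ℕ => X) 2 → lp (fun _ : ℕ => Y) 2}
    (hT : ∀ u n, T u n = ∑ k ∈ Finset.range (n + 1), θ k (u (n - k)))
    {S : lp (fun _ : ℕ => Y) 2 → lp (fun _ : ℕ => Y) 2} (hS : IsForwardShift S) :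
    Semiconj T shiftRight S := by
  intro v
  ext (_ | n)
  · simp [hT, hS _ _, shiftRight]
  · rw [hT, hS, if_neg n.succ_ne_zero, Nat.add_sub_cancel, hT, Finset.sum_range_succ]
    have hlast : θ (n + 1) (shiftRight v (n + 1 - (n + 1))) = 0 := by simp [shiftRight]
    rw [hlast, add_zero]
    refine Finset.sum_congr rfl fun k hk => ?_
    have hk' : n + 1 - k = n - k + 1 := by have := Finset.mem_range.1 hk; omega
    simp [shiftRight, hk']

theorem semiconj_shiftRight_of_apply_eq_ite
    {ι : lp (fun _ : ℕ => X) 2 → lp (fun _ : ℤ => X) 2}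
    (hι : ∀ u n, ι u n = if 0 ≤ n then u n.toNat else 0)
    {U : lp (fun _ : ℤ => X) 2 → lp (fun _ : ℤ => X) 2} (hU : IsBilateralShift U) :
    Semiconj ι shiftRight U := by
  intro v
  ext n
  rw [hU, hι, hι]
  rcases lt_trichotomy n 0 with hn | rfl | hn
  · rw [if_neg hn.not_ge, if_neg (by omega)]
  · simp [shiftRight]
  · rw [if_pos hn.le, if_pos (by omega), show (n - 1).toNat = n.toNat - 1 by omega]
    simp [shiftRight, show n.toNat ≠ 0 by omega]

variable {𝕜 : Type*} [RCLike 𝕜] [InnerProductSpace 𝕜 X]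

theorem IsForwardShift.inner_map_map {S : lp (fun _ : ℕ => X) 2 → lp (fun _ : ℕ => X) 2}
    (hS : IsForwardShift S) (f g : lp (fun _ : ℕ => X) 2) : ⟪S f, S g⟫_𝕜 = ⟪f, g⟫_𝕜 := by
  rw [inner_eq_tsum, inner_eq_tsum, (summable_inner (𝕜 := 𝕜) (S f) (S g)).tsum_eq_zero_add]
  simp [hS _ _]

theorem IsBilateralShift.inner_map_map {U : lp (fun _ : ℤ => X) 2 → lp (fun _ : ℤ => X) 2}
    (hU : IsBilateralShift U) (f g : lp (fun _ : ℤ => X) 2) : ⟪U f, U g⟫_𝕜 = ⟪f, g⟫_𝕜 := by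
  rw [inner_eq_tsum, inner_eq_tsum]
  simp only [hU _ _]
  exact (Equiv.subRight 1).tsum_eq fun n => ⟪f n, g n⟫_𝕜

end Shifts

end lp

open Topology in
theorem mem_closure_range_iff_of_commute {X : Type*} [TopologicalSpace X] {T U : X → X}
    (hU : IsInducing U) (hUs : Surjective U) (hTU : Function.Commute T U) {x : X} :
    U x ∈ closure (range T) ↔ x ∈ closure (range T) := by
  conv_rhs => rw [hU.closure_eq_preimage_closure_image (range T), ← range_comp,
    ← hTU.comp_eq, hUs.range_comp]
  rfl

section NormSqAdd

variable {𝕜 X Y Z : Type*} [RCLike 𝕜] [NormedAddCommGroup X] [NormedAddCommGroup Y]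
  [NormedAddCommGroup Z]

def LinearMap.prodL2Isometry [NormedSpace 𝕜 X] [NormedSpace 𝕜 Y] [NormedSpace 𝕜 Z]
    (A : X →ₗ[𝕜] Y) (B : X →ₗ[𝕜] Z) (h : ∀ u, ‖A u‖ ^ 2 + ‖B u‖ ^ 2 = ‖u‖ ^ 2) :
    X →ₗᵢ[𝕜] WithLp 2 (Y × Z) where
  toLinearMap := (WithLp.linearEquiv 2 𝕜 (Y × Z)).symm.toLinearMap ∘ₗ A.prod B
  norm_map' u := by
    rw [← sq_eq_sq₀ (norm_nonneg _) (norm_nonneg _), WithLp.prod_norm_sq_eq_of_L2, ← h u]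
    rfl

theorem isClosed_range_of_norm_sq_add_norm_sq [NormedSpace 𝕜 X] [NormedSpace 𝕜 Y]
    [NormedSpace 𝕜 Z] [CompleteSpace X] {A : X →ₗ[𝕜] Y} {B : X →ₗ[𝕜] Z}
    (h : ∀ u, ‖A u‖ ^ 2 + ‖B u‖ ^ 2 = ‖u‖ ^ 2) : IsClosed (range fun u => (A u, B u)) := by
  let e := (WithLp.prodContinuousLinearEquiv 2 𝕜 Y Z).toHomeomorph
  have hcomp : (fun u => (A u, B u)) = e ∘ A.prodL2Isometry B h := rfl
  rw [hcomp, range_comp, e.isClosed_image]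
  exact (A.prodL2Isometry B h).isometry.isClosedEmbedding.isClosed_range

theorem inner_add_inner_eq_of_norm_sq_add_norm_sq [InnerProductSpace 𝕜 X] [InnerProductSpace 𝕜 Y]
    [InnerProductSpace 𝕜 Z] {A : X →ₗ[𝕜] Y} {B : X →ₗ[𝕜] Z}
    (h : ∀ u, ‖A u‖ ^ 2 + ‖B u‖ ^ 2 = ‖u‖ ^ 2) (u v : X) :
    ⟪A u, A v⟫_𝕜 + ⟪B u, B v⟫_𝕜 = ⟪u, v⟫_𝕜 := by
  have := (A.prodL2Isometry B h).inner_map_map u v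
  rwa [WithLp.prod_inner_apply] at this

end NormSqAdd

section Model

omit [CompleteSpace E] [CompleteSpace Estar]

variable {MΘ : HardyS E →L[ℂ] HardyS Estar} {MΔ : LebS E →L[ℂ] LebS E} {ι : HardyS E →L[ℂ] LebS E}

theorem eq_of_mem_HTheta_of_sub_mem_Mset {q r : HardyS Estar × LebS E}
    (hq : q ∈ HTheta MΘ MΔ ι) (hr : r ∈ HTheta MΘ MΔ ι) (hqr : q - r ∈ Mset MΘ MΔ ι) :
    q = r := by
  obtain ⟨w, hw⟩ := hqr
  have h₁ : q.1 - r.1 = MΘ w := congrArg Prod.fst hw.symm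
  have h₂ : q.2 - r.2 = MΔ (ι w) := congrArg Prod.snd hw.symm
  have hself : ⟪MΘ w, MΘ w⟫_ℂ + ⟪MΔ (ι w), MΔ (ι w)⟫_ℂ = 0 :=
    calc _ = ⟪q.1 - r.1, MΘ w⟫_ℂ + ⟪q.2 - r.2, MΔ (ι w)⟫_ℂ := by rw [h₁, h₂]
      _ = 0 := by rw [inner_sub_left, inner_sub_left, sub_add_sub_comm, hq.2, hr.2, sub_zero]
  have hw0 : WithLp.toLp 2 (MΘ w, MΔ (ι w)) = 0 :=
    inner_self_eq_zero (𝕜 := ℂ).1 (by rwa [WithLp.prod_inner_apply])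
  rw [← sub_eq_zero, ← hw]
  simpa using hw0

theorem mem_HTheta_of_shift_eq_add_single (hnorm : ∀ u, ‖MΘ u‖ ^ 2 + ‖MΔ (ι u)‖ ^ 2 = ‖u‖ ^ 2)
    {Sop : HardyS Estar →L[ℂ] HardyS Estar} (hS : lp.IsForwardShift Sop)
    {Uop : LebS E →L[ℂ] LebS E} (hU : lp.IsBilateralShift Uop) (hcomm : Function.Commute MΔ Uop)
    (hΘS : Semiconj MΘ lp.shiftRight Sop) (hιU : Semiconj ι lp.shiftRight Uop)
    {p q : HardyS Estar × LebS E} (hq : q ∈ HTheta MΘ MΔ ι) (y : E)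
    (h₁ : Sop p.1 = q.1 + MΘ (lp.single 2 0 y))
    (h₂ : Uop p.2 = q.2 + MΔ (ι (lp.single 2 0 y))) :
    p ∈ HTheta MΘ MΔ ι := by
  set u : HardyS E := lp.single 2 0 y
  refine ⟨?_, fun v => ?_⟩
  · have hUiso : Isometry Uop := AddMonoidHomClass.isometry_of_norm Uop fun f => by
      simp only [@norm_eq_sqrt_re_inner ℂ, hU.inner_map_map]
    rw [← mem_closure_range_iff_of_commute hUiso.isUniformInducing.isInducing hU.surjective hcomm,
      h₂]
    have hq₂ := hq.1
    rw [← ContinuousLinearMap.coe_coe MΔ, ← LinearMap.coe_range,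
      ← Submodule.topologicalClosure_coe] at hq₂ ⊢
    exact Submodule.add_mem _ hq₂ (Submodule.le_topologicalClosure _ ⟨ι u, rfl⟩)
  · set w := lp.shiftRight v
    have hΔ : MΔ (ι w) = Uop (MΔ (ι v)) := by rw [hιU v, hcomm]
    have huw : ⟪u, w⟫_ℂ = 0 := by
      simp [u, w, lp.inner_single_left, lp.shiftRight]
    calc ⟪p.1, MΘ v⟫_ℂ + ⟪p.2, MΔ (ι v)⟫_ℂ = ⟪Sop p.1, MΘ w⟫_ℂ + ⟪Uop p.2, MΔ (ι w)⟫_ℂ := by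
          rw [hΘS v, hΔ, hS.inner_map_map, hU.inner_map_map]
      _ = (⟪q.1, MΘ w⟫_ℂ + ⟪q.2, MΔ (ι w)⟫_ℂ) + (⟪MΘ u, MΘ w⟫_ℂ + ⟪MΔ (ι u), MΔ (ι w)⟫_ℂ) := by
          rw [h₁, h₂, inner_add_left, inner_add_left]
          ring
      _ = ⟪u, w⟫_ℂ := by
          rw [hq.2 w, zero_add]
          exact inner_add_inner_eq_of_norm_sq_add_norm_sq
            (A := (MΘ : HardyS E →ₗ[ℂ] HardyS Estar))
            (B := ((MΔ ∘L ι : HardyS E →L[ℂ] LebS E) : HardyS E →ₗ[ℂ] LebS E)) hnorm u w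
      _ = 0 := huw

end Model

/-- The range of the model operator `S(Θ) = P_{H(Θ)}(S ⊕ U)|H(Θ)` equals
`{f₁ ⊕ f₂ ∈ H(Θ) : f₁(0) ∈ Θ(0)E}`.  Here `S(Θ)` is characterized by: it maps `H(Θ)` to
`H(Θ)`, and for `p ∈ H(Θ)` the difference `(S ⊕ U)p − S(Θ)p` lies in the closure of
`M(Θ)` (i.e. `S(Θ)p` is the orthogonal projection of `(S ⊕ U)p` onto `H(Θ)`). -/
theorem range_model_operator
    (θ : ℕ → E →L[ℂ] Estar)
    (MΘ : HardyS E →L[ℂ] HardyS Estar)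
    (hMΘ : ∀ (u : HardyS E) (n : ℕ), (MΘ u) n = ∑ k ∈ Finset.range (n + 1), θ k (u (n - k)))
    (MΔ : LebS E →L[ℂ] LebS E)
    (ι : HardyS E →L[ℂ] LebS E)
    (hι : ∀ (u : HardyS E) (n : ℤ), (ι u) n = if 0 ≤ n then u n.toNat else 0)
    (hnorm : ∀ u : HardyS E, ‖MΘ u‖ ^ 2 + ‖MΔ (ι u)‖ ^ 2 = ‖u‖ ^ 2)
    (Sop : HardyS Estar →L[ℂ] HardyS Estar)
    (hS : ∀ (f : HardyS Estar) (n : ℕ), (Sop f) n = if n = 0 then 0 else f (n - 1))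
    (Uop : LebS E →L[ℂ] LebS E)
    (hU : ∀ (f : LebS E) (n : ℤ), (Uop f) n = f (n - 1))
    (hcomm : ∀ f : LebS E, MΔ (Uop f) = Uop (MΔ f))
    (SΘ : HardyS Estar × LebS E →L[ℂ] HardyS Estar × LebS E)
    (hSΘmem : ∀ p ∈ HTheta MΘ MΔ ι, SΘ p ∈ HTheta MΘ MΔ ι)
    (hSΘproj : ∀ p ∈ HTheta MΘ MΔ ι,
      ((Sop p.1, Uop p.2) : HardyS Estar × LebS E) - SΘ p ∈ closure (Mset MΘ MΔ ι)) :
    SΘ '' HTheta MΘ MΔ ι =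
      {p | p ∈ HTheta MΘ MΔ ι ∧ ∃ x : E, (p.1) 0 = θ 0 x} := by
  have hMclosed : closure (Mset MΘ MΔ ι) = Mset MΘ MΔ ι :=
    (isClosed_range_of_norm_sq_add_norm_sq (A := (MΘ : HardyS E →ₗ[ℂ] HardyS Estar))
      (B := ((MΔ ∘L ι : HardyS E →L[ℂ] LebS E) : HardyS E →ₗ[ℂ] LebS E)) hnorm).closure_eq
  ext q
  constructor
  · rintro ⟨p, hp, rfl⟩
    obtain ⟨m, hm⟩ := hMclosed ▸ hSΘproj p hp
    refine ⟨hSΘmem p hp, -m 0, ?_⟩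
    have h0 : MΘ m 0 = Sop p.1 0 - (SΘ p).1 0 := congrArg (fun r => r.1 0) hm
    simp only [hMΘ, hS, zero_add, Finset.range_one, Finset.sum_singleton, if_true,
      zero_sub] at h0
    rw [map_neg, h0, neg_neg]
  · rintro ⟨hq, x, hx⟩
    set u : HardyS E := lp.single 2 0 (-x)
    have hu0 : (q.1 + MΘ u) 0 = 0 := by simp [hMΘ, u, hx]
    obtain ⟨p₁, hp₁⟩ := lp.IsForwardShift.exists_eq_of_apply_zero hS hu0
    obtain ⟨p₂, hp₂⟩ := lp.IsBilateralShift.surjective hU (q.2 + MΔ (ι u))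
    have hp : (p₁, p₂) ∈ HTheta MΘ MΔ ι :=
      mem_HTheta_of_shift_eq_add_single hnorm hS hU hcomm
        (lp.semiconj_shiftRight_of_apply_eq_sum hMΘ hS)
        (lp.semiconj_shiftRight_of_apply_eq_ite hι hU) hq (-x) hp₁ hp₂
    obtain ⟨m, hm⟩ := hMclosed ▸ hSΘproj _ hp
    refine ⟨(p₁, p₂), hp, (eq_of_mem_HTheta_of_sub_mem_Mset hq (hSΘmem _ hp) ⟨m - u, ?_⟩).symm⟩
    simp only [Prod.ext_iff, Prod.fst_sub, Prod.snd_sub, hp₁, hp₂] at hm ⊢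
    constructor
    · rw [map_sub, hm.1]; abel
    · rw [map_sub, map_sub, hm.2]; abel
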